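/- arXiv:0709.3715 — 4 statements merged into one kernel-verified Lean document; each statement's English description precedes it below -/
import Mathlib

section
/- Let X be a compact pospace whose partial order is lower open. Let FX denote the set of closed upper subsets of X, topologized by the topology generated by the sets {A ∈ FX | A ⊆ V} for V open in X together with the sets {B ∈ FX | B ∩ W ≠ ∅} for W open in X with W = ↓W. Let FUX denote the set of all closed subsets of X, topologized by the topology generated by the sets {A | A ⊆ V} for V open together with the sets {B | B ∩ W ≠ ∅} for W open. Then the inclusion function FX → FUX is continuous. -/
open Topology

/-- The lower closure of a subset of a preordered set. -/
def lowerCl {X : Type*} [Preorder X] (W : Set X) : Set X := {x : X | ∃ w ∈ W, x ≤ w}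

/-- The hyperspace `FX` of closed upper subsets of a compact pospace `X`, with the
topology generated by `{A | A ⊆ V}` for `V` open and `{B | B ∩ W ≠ ∅}` for `W` open
and a lower set. -/
def hyperUpperTop (X : Type*) [TopologicalSpace X] [PartialOrder X] :
    TopologicalSpace {A : Set X // IsClosed A ∧ ∀ a ∈ A, ∀ x, a ≤ x → x ∈ A} :=
  TopologicalSpace.generateFrom
    ({S | ∃ V : Set X, IsOpen V ∧
        S = {A : {A : Set X // IsClosed A ∧ ∀ a ∈ A, ∀ x, a ≤ x → x ∈ A} | A.1 ⊆ V}} ∪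
     {S | ∃ W : Set X, IsOpen W ∧ W = lowerCl W ∧
        S = {B : {A : Set X // IsClosed A ∧ ∀ a ∈ A, ∀ x, a ≤ x → x ∈ A} |
              (B.1 ∩ W).Nonempty}})

/-- The hyperspace `FUX` of all closed subsets of `X`, with the topology generated by
`{A | A ⊆ V}` and `{B | B ∩ W ≠ ∅}` for `V`, `W` open. -/
def hyperTop (X : Type*) [TopologicalSpace X] :
    TopologicalSpace {A : Set X // IsClosed A} :=
  TopologicalSpace.generateFrom
    ({S | ∃ V : Set X, IsOpen V ∧ S = {A : {A : Set X // IsClosed A} | A.1 ⊆ V}} ∪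
     {S | ∃ W : Set X, IsOpen W ∧ S = {B : {A : Set X // IsClosed A} | (B.1 ∩ W).Nonempty}})

theorem lowerCl_lowerCl {X : Type*} [Preorder X] (W : Set X) :
    lowerCl (lowerCl W) = lowerCl W := by
  ext x
  constructor
  · rintro ⟨y, ⟨w, hw, hyw⟩, hxy⟩
    exact ⟨w, hw, hxy.trans hyw⟩
  · exact fun hx => ⟨x, hx, le_rfl⟩

theorem inter_lowerCl_nonempty_iff {X : Type*} [Preorder X] {B : Set X}
    (hB : ∀ b ∈ B, ∀ x, b ≤ x → x ∈ B) (W : Set X) :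
    (B ∩ lowerCl W).Nonempty ↔ (B ∩ W).Nonempty := by
  constructor
  · rintro ⟨x, hxB, w, hw, hxw⟩
    exact ⟨w, hB x hxB w hxw, hw⟩
  · rintro ⟨x, hxB, hxW⟩
    exact ⟨x, hxB, x, hxW, le_rfl⟩

theorem stmt_5_general {X : Type*} [TopologicalSpace X] [PartialOrder X]
    (hlo : ∀ V : Set X, IsOpen V → IsOpen (lowerCl V)) :
    Continuous[hyperUpperTop X, hyperTop X]
      (fun A : {A : Set X // IsClosed A ∧ ∀ a ∈ A, ∀ x, a ≤ x → x ∈ A} =>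
        (⟨A.1, A.2.1⟩ : {A : Set X // IsClosed A})) := by
  rw [hyperTop, continuous_generateFrom_iff]
  rintro S (⟨V, hV, rfl⟩ | ⟨W, hW, rfl⟩)
  · exact .basic _ (Or.inl ⟨V, hV, rfl⟩)
  · -- the preimage of the `W`-hitting set is the `↓W`-hitting set, and `↓W` is open and lower
    have hhit : IsOpen[hyperUpperTop X]
        {B : {A : Set X // IsClosed A ∧ ∀ a ∈ A, ∀ x, a ≤ x → x ∈ A} |
          (B.1 ∩ lowerCl W).Nonempty} :=
      .basic _ (Or.inr ⟨lowerCl W, hlo W hW, (lowerCl_lowerCl W).symm, rfl⟩)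
    convert hhit using 1
    exact Set.ext fun B => (inter_lowerCl_nonempty_iff B.2.2 W).symm

/-- If `X` is a compact pospace with lower open partial order, then the inclusion
`FX → FUX` is continuous. -/
theorem stmt_5 {X : Type*} [TopologicalSpace X] [PartialOrder X] [CompactSpace X]
    (hpos : IsClosed {p : X × X | p.1 ≤ p.2})
    (hlo : ∀ V : Set X, IsOpen V → IsOpen (lowerCl V)) :
    Continuous[hyperUpperTop X, hyperTop X]
      (fun A : {A : Set X // IsClosed A ∧ ∀ a ∈ A, ∀ x, a ≤ x → x ∈ A} =>
        (⟨A.1, A.2.1⟩ : {A : Set X // IsClosed A})) :=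
  stmt_5_general hlo
end

section
/- Let X be a compact pospace whose partial order is lower open, and let Y be a complete lattice carrying a Lawson-lattice topology. For a continuous function f : X → Y, define R(f) : X → Y by R(f)(x) = ⨅ { f(x') | x ≤ x' }. Then: (1) for every continuous f : X → Y, the function R(f) is continuous and monotone; and (2) if f : X → Y is continuous and monotone, then R(f) = f. Hence R is a retraction of the inclusion of monotone continuous maps X → Y into continuous maps X → Y. -/
/-!
Fix `x₀` and put `y₀ := infAbove f x₀`. Lower openness pushes every cluster point of
`infAbove f` at `x₀` below each `f x'` with `x₀ ≤ x'`, since it lies in the closed lower set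
generated by any closed neighbourhood of `f x'`. Conversely `infAbove f x ⊓ y₀ → y₀`: for a
closed inf-closed neighbourhood `V` of `y₀`, compactness of `X` and the closed order give
`f x' ⊓ y₀ ∈ V` for all `x' ≥ x` once `x` is near `x₀`, and a closed inf-closed subset of a
compact lattice with closed order is closed under nonempty infima. So `y₀` is the only cluster
point of `infAbove f` at `x₀`, which in the compact space `Y` means convergence.
-/

open Filter Set Topology

theorem ContinuousInf.orderClosedTopology {Y : Type*} [SemilatticeInf Y] [TopologicalSpace Y]
    [T2Space Y] [ContinuousInf Y] : OrderClosedTopology Y where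
  isClosed_le' := by
    simp_rw [← inf_eq_left]
    exact isClosed_eq continuous_inf continuous_fst

theorem InfClosed.closure {Y : Type*} [SemilatticeInf Y] [TopologicalSpace Y] [ContinuousInf Y]
    {s : Set Y} (hs : InfClosed s) : InfClosed (closure s) :=
  fun _ ha _ hb => map_mem_closure₂ continuous_inf ha hb fun _ ha' _ hb' => hs ha' hb'

theorem exists_isClosed_infClosed_mem_nhds_subset {Y : Type*} [SemilatticeInf Y]
    [TopologicalSpace Y] [RegularSpace Y] [ContinuousInf Y] {y : Y}
    (hbasis : (𝓝 y).HasBasis (fun s => s ∈ 𝓝 y ∧ InfClosed s) id) {U : Set Y} (hU : U ∈ 𝓝 y) :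
    ∃ V ∈ 𝓝 y, IsClosed V ∧ InfClosed V ∧ V ⊆ U := by
  obtain ⟨C, hC, hCc, hCU⟩ := exists_mem_nhds_isClosed_subset hU
  obtain ⟨s, ⟨hs, hsinf⟩, hsC⟩ := hbasis.mem_iff.1 hC
  exact ⟨closure s, mem_of_superset hs subset_closure, isClosed_closure, hsinf.closure,
    (closure_minimal hsC hCc).trans hCU⟩

section CompactOrder

variable {X : Type*} [TopologicalSpace X] [Preorder X] [CompactSpace X] [OrderClosedTopology X]

theorem IsClosed.lowerClosure_of_compactSpace {C : Set X} (hC : IsClosed C) :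
    IsClosed (lowerClosure C : Set X) := by
  have h : (lowerClosure C : Set X) = Prod.fst '' ({p : X × X | p.1 ≤ p.2} ∩ univ ×ˢ C) := by
    ext x
    simp [mem_lowerClosure, and_comm]
  rw [h]
  exact isClosedMap_fst_of_compactSpace _ (isClosed_le_prod.inter (isClosed_univ.prod hC))

theorem eventually_Ici_subset {O : Set X} (hO : IsOpen O) {x₀ : X} (h : Ici x₀ ⊆ O) :
    ∀ᶠ x in 𝓝 x₀, Ici x ⊆ O := by
  have hx₀ : x₀ ∉ lowerClosure Oᶜ := fun hx₀ => by
    obtain ⟨v, hvO, hv⟩ := mem_lowerClosure.1 hx₀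
    exact hvO (h hv)
  filter_upwards [hO.isClosed_compl.lowerClosure_of_compactSpace.isOpen_compl.mem_nhds hx₀]
    with x hx v hv
  by_contra hvO
  exact hx (mem_lowerClosure.2 ⟨v, hvO, hv⟩)

end CompactOrder

section CompactLattice

variable {Y : Type*} [CompleteLattice Y] [TopologicalSpace Y] [CompactSpace Y]
  [OrderClosedTopology Y]

-- Any cluster point of the codirected net of finite infima of `K` is squeezed to `sInf K`.
theorem IsClosed.sInf_mem_of_infClosed {V K : Set Y} (hV : IsClosed V) (hVinf : InfClosed V)
    (hK : K.Nonempty) (hKV : K ⊆ V) : sInf K ∈ V := by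
  classical
  obtain ⟨k₀, hk₀⟩ := hK
  let φ : Finset K → Y := fun F => (insert ⟨k₀, hk₀⟩ F).inf' (Finset.insert_nonempty _ _) (↑)
  obtain ⟨z, hz⟩ := exists_clusterPt_of_compactSpace (map φ atTop)
  have hzV : z ∈ V := hV.mem_of_mapClusterPt hz <| Eventually.of_forall fun _ =>
    hVinf.finsetInf'_mem _ fun (k : K) _ => hKV k.2
  have hz_le : z ≤ sInf K := le_sInf fun k hk =>
    isClosed_Iic.mem_of_mapClusterPt hz <| (eventually_ge_atTop {⟨k, hk⟩}).mono fun _ hF =>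
      Finset.inf'_le _ (Finset.mem_insert_of_mem (hF (Finset.mem_singleton_self _)))
  have hle_z : sInf K ≤ z := isClosed_Ici.mem_of_mapClusterPt hz <| Eventually.of_forall
    fun _ => Finset.le_inf' _ _ fun k _ => sInf_le k.2
  exact le_antisymm hle_z hz_le ▸ hzV

end CompactLattice

def infAbove {X Y : Type*} [Preorder X] [CompleteLattice Y] (f : X → Y) (x : X) : Y :=
  sInf (f '' Ici x)

section InfAbove

variable {X Y : Type*} [Preorder X] [CompleteLattice Y]

theorem monotone_infAbove (f : X → Y) : Monotone (infAbove f) :=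
  fun _ _ hab => sInf_le_sInf (image_mono (Ici_subset_Ici.2 hab))

theorem infAbove_eq_of_monotone {f : X → Y} (hf : Monotone f) : infAbove f = f :=
  funext fun x => le_antisymm (sInf_le ⟨x, self_mem_Ici, rfl⟩)
    (le_sInf <| by rintro _ ⟨x', hx', rfl⟩; exact hf hx')

theorem infAbove_inf (f : X → Y) (x : X) (y : Y) :
    infAbove f x ⊓ y = sInf ((· ⊓ y) '' (f '' Ici x)) := by
  rw [infAbove, image_image, sInf_image, sInf_image, biInf_inf ⟨x, self_mem_Ici⟩]

variable [TopologicalSpace X] [TopologicalSpace Y] [CompactSpace Y] [OrderClosedTopology Y]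
  {f : X → Y}

theorem le_infAbove_of_mapClusterPt
    (hlo : ∀ V : Set X, IsOpen V → IsOpen (lowerClosure V : Set X)) (hf : Continuous f)
    {x₀ : X} {z : Y} (hz : MapClusterPt z (𝓝 x₀) (infAbove f)) : z ≤ infAbove f x₀ := by
  refine le_sInf ?_
  rintro _ ⟨x', hx', rfl⟩
  by_contra hzf
  obtain ⟨C, hC, hCc, hCz⟩ :=
    exists_mem_nhds_isClosed_subset (isClosed_Ici.isOpen_compl.mem_nhds hzf)
  have hx₀ : x₀ ∈ lowerClosure (f ⁻¹' interior C) :=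
    mem_lowerClosure.2 ⟨x', mem_interior_iff_mem_nhds.2 hC, hx'⟩
  have hev : ∀ᶠ x in 𝓝 x₀, infAbove f x ∈ lowerClosure C := by
    filter_upwards [(hlo _ (isOpen_interior.preimage hf)).mem_nhds hx₀] with x hx
    obtain ⟨v, hv, hxv⟩ := mem_lowerClosure.1 hx
    exact mem_lowerClosure.2 ⟨f v, interior_subset hv, sInf_le ⟨v, hxv, rfl⟩⟩
  obtain ⟨q, hqC, hzq⟩ :=
    mem_lowerClosure.1 (hCc.lowerClosure_of_compactSpace.mem_of_mapClusterPt hz hev)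
  exact hCz hqC hzq

variable [CompactSpace X] [OrderClosedTopology X] [ContinuousInf Y]

theorem tendsto_infAbove_inf (hf : Continuous f) {x₀ : X}
    (hbasis : (𝓝 (infAbove f x₀)).HasBasis (fun s => s ∈ 𝓝 (infAbove f x₀) ∧ InfClosed s) id) :
    Tendsto (fun x => infAbove f x ⊓ infAbove f x₀) (𝓝 x₀) (𝓝 (infAbove f x₀)) := by
  set y₀ := infAbove f x₀
  refine fun U hU => mem_map.2 ?_
  obtain ⟨V, hV, hVc, hVinf, hVU⟩ := exists_isClosed_infClosed_mem_nhds_subset hbasis hU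
  have hO : IsOpen (f ⁻¹' ((· ⊓ y₀) ⁻¹' interior V)) :=
    (isOpen_interior.preimage (continuous_id.inf continuous_const)).preimage hf
  have hx₀ : Ici x₀ ⊆ f ⁻¹' ((· ⊓ y₀) ⁻¹' interior V) := fun x' hx' => by
    have hle : y₀ ≤ f x' := sInf_le (mem_image_of_mem f hx')
    show f x' ⊓ y₀ ∈ interior V
    rw [inf_eq_right.2 hle]
    exact mem_interior_iff_mem_nhds.2 hV
  filter_upwards [eventually_Ici_subset hO hx₀] with x hx
  rw [mem_preimage, infAbove_inf]
  refine hVU (hVc.sInf_mem_of_infClosed hVinf ⟨_, _, ⟨x, self_mem_Ici, rfl⟩, rfl⟩ ?_)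
  rintro _ ⟨_, ⟨x', hx', rfl⟩, rfl⟩
  exact interior_subset (hx hx')

theorem continuous_infAbove
    (hlo : ∀ V : Set X, IsOpen V → IsOpen (lowerClosure V : Set X)) (hf : Continuous f)
    (hbasis : ∀ y : Y, (𝓝 y).HasBasis (fun s => s ∈ 𝓝 y ∧ InfClosed s) id) :
    Continuous (infAbove f) := by
  refine continuous_iff_continuousAt.2 fun x₀ =>
    tendsto_nhds_of_unique_mapClusterPt fun z hz => ?_
  refine le_antisymm (le_infAbove_of_mapClusterPt hlo hf hz) ?_
  have hcluster : MapClusterPt (z ⊓ infAbove f x₀) (𝓝 x₀)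
      (fun x => infAbove f x ⊓ infAbove f x₀) :=
    hz.continuousAt_comp (continuous_id.inf continuous_const).continuousAt
  have hlim := tendsto_infAbove_inf hf (hbasis (infAbove f x₀))
  exact inf_eq_right.1 (eq_of_nhds_neBot ((ClusterPt.mono hcluster hlim).neBot))

end InfAbove

/-- Let `X` be a compact pospace with lower open partial order, and let `Y` be a
complete lattice carrying a Lawson-lattice topology (compact Hausdorff, binary inf
jointly continuous, and every point admits a neighborhood basis of sub-inf-semilattices).
For `f : X → Y` define `R f x = ⨅ {f x' | x ≤ x'}`.  Then `R f` is continuous and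
monotone for every continuous `f`, and `R f = f` when `f` is moreover monotone. -/
theorem stmt_6 {X Y : Type*} [TopologicalSpace X] [PartialOrder X] [CompactSpace X]
    (hpos : IsClosed {p : X × X | p.1 ≤ p.2})
    (hlo : ∀ V : Set X, IsOpen V → IsOpen {x : X | ∃ v ∈ V, x ≤ v})
    [CompleteLattice Y] [TopologicalSpace Y] [CompactSpace Y] [T2Space Y]
    (hinf : Continuous fun p : Y × Y => p.1 ⊓ p.2)
    (hbasis : ∀ y : Y, (nhds y).HasBasis
      (fun s : Set Y => s ∈ nhds y ∧ ∀ a ∈ s, ∀ b ∈ s, a ⊓ b ∈ s) id) :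
    (∀ f : X → Y, Continuous f →
        Continuous (fun x : X => sInf (f '' {x' : X | x ≤ x'})) ∧
        Monotone (fun x : X => sInf (f '' {x' : X | x ≤ x'}))) ∧
    (∀ f : X → Y, Continuous f → Monotone f →
        (fun x : X => sInf (f '' {x' : X | x ≤ x'})) = f) := by
  have : ContinuousInf Y := ⟨hinf⟩
  have : OrderClosedTopology Y := ContinuousInf.orderClosedTopology
  have : OrderClosedTopology X := ⟨hpos⟩
  exact ⟨fun f hf => ⟨continuous_infAbove hlo hf hbasis, monotone_infAbove f⟩,
    fun _ _ hmono => infAbove_eq_of_monotone hmono⟩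
end

section
/- Let L be an inf-semilattice equipped with a topology for which the binary infimum ⊓ : L × L → L is jointly continuous, and suppose the underlying topological space of L is path-connected. Then all homotopy groups of L are trivial: for every basepoint x ∈ L and every n ≥ 1, the homotopy group πₙ(L, x) is trivial. -/
/-!
Pointwise infimum of generalized loops descends to a commutative, associative, idempotent
operation `⊓` on `πₙ(L, x)`, and since concatenation along a coordinate commutes with pointwise
infimum, it satisfies the interchange law `(a * b) ⊓ (c * d) = (a ⊓ c) * (b ⊓ d)`. This kills the
group: `a = (a * 1) ⊓ (1 * a) = (a ⊓ 1)²`, and applied to `a ⊓ 1`, which is fixed by `· ⊓ 1`,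
the same identity gives `a ⊓ 1 = 1`.
-/

open Topology Topology.Homotopy GenLoop unitInterval

theorem Group.subsingleton_of_inf_mul_inf {G : Type*} [Group G] [SemilatticeInf G]
    (h : ∀ a b c d : G, (a * b) ⊓ (c * d) = (a ⊓ c) * (b ⊓ d)) : Subsingleton G := by
  have sq : ∀ a : G, a = (a ⊓ 1) * (a ⊓ 1) := fun a => by
    simpa [inf_comm (1 : G) a] using h a 1 1 a
  have one : ∀ a : G, a ⊓ 1 = 1 := fun a => by
    have := sq (a ⊓ 1)
    rw [inf_right_idem] at this
    simpa using this
  refine ⟨fun a b => ?_⟩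
  rw [sq a, sq b, one, one]

namespace ContinuousMap.HomotopicRel

variable {X L : Type*} [TopologicalSpace X] [TopologicalSpace L] [SemilatticeInf L]
  [ContinuousInf L] {S : Set X} {f₀ f₁ g₀ g₁ : C(X, L)}

theorem inf (hf : f₀.HomotopicRel f₁ S) (hg : g₀.HomotopicRel g₁ S) :
    (f₀ ⊓ g₀).HomotopicRel (f₁ ⊓ g₁) S :=
  hf.map2 (fun F G =>
    { toFun := fun p => F p ⊓ G p
      map_zero_left := fun x => by simp
      map_one_left := fun x => by simp
      prop' := fun t x hx => by simp [F.eq_fst t hx, G.eq_fst t hx] }) hg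

end ContinuousMap.HomotopicRel

namespace GenLoop

variable {N L : Type*} [TopologicalSpace L] [SemilatticeInf L] [ContinuousInf L] {x : L}

instance : SemilatticeInf (Ω^ N L x) :=
  Subtype.semilatticeInf fun f g hf hg y hy => by simp [hf y hy, hg y hy]

@[simp] lemma inf_apply (f g : Ω^ N L x) (y : I^N) : (f ⊓ g) y = f y ⊓ g y := rfl

theorem Homotopic.inf {f f' g g' : Ω^ N L x} (hf : Homotopic f f') (hg : Homotopic g g') :
    Homotopic (f ⊓ g) (f' ⊓ g') :=
  ContinuousMap.HomotopicRel.inf hf hg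

theorem transAt_inf [DecidableEq N] (i : N) (a b c d : Ω^ N L x) :
    transAt i (a ⊓ b) (c ⊓ d) = transAt i a c ⊓ transAt i b d := by
  ext y
  simp only [inf_apply, transAt, coe_copy]
  split_ifs <;> rfl

end GenLoop

namespace HomotopyGroup

variable {N L : Type*} [TopologicalSpace L] [SemilatticeInf L] [ContinuousInf L] {x : L}

instance : Min (HomotopyGroup N L x) :=
  ⟨Quotient.map₂ (· ⊓ ·) fun _ _ hf _ _ hg => hf.inf hg⟩

instance : SemilatticeInf (HomotopyGroup N L x) :=
  SemilatticeInf.mk'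
    (by rintro ⟨f⟩ ⟨g⟩; exact congrArg _ (inf_comm f g))
    (by rintro ⟨f⟩ ⟨g⟩ ⟨h⟩; exact congrArg _ (inf_assoc f g h))
    (by rintro ⟨f⟩; exact congrArg _ (inf_idem f))

theorem mul_inf_mul [DecidableEq N] [Nonempty N] (a b c d : HomotopyGroup N L x) :
    (a * b) ⊓ (c * d) = (a ⊓ c) * (b ⊓ d) := by
  obtain ⟨a⟩ := a; obtain ⟨b⟩ := b; obtain ⟨c⟩ := c; obtain ⟨d⟩ := d
  let mk : Ω^ N L x → HomotopyGroup N L x := Quotient.mk _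
  have mk_mul_mk (p q : Ω^ N L x) : mk p * mk q = mk (transAt (Classical.arbitrary N) q p) :=
    mul_spec
  change (mk a * mk b) ⊓ (mk c * mk d) = mk (a ⊓ c) * mk (b ⊓ d)
  rw [mk_mul_mk, mk_mul_mk, mk_mul_mk, GenLoop.transAt_inf]
  rfl

end HomotopyGroup

theorem stmt_11_general {L : Type*} [SemilatticeInf L] [TopologicalSpace L]
    (hinf : Continuous fun p : L × L => p.1 ⊓ p.2) :
    ∀ (x : L) (n : ℕ), 1 ≤ n → Subsingleton (HomotopyGroup (Fin n) L x) := by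
  intro x n hn
  have : ContinuousInf L := ⟨hinf⟩
  have : Nonempty (Fin n) := ⟨⟨0, hn⟩⟩
  exact Group.subsingleton_of_inf_mul_inf HomotopyGroup.mul_inf_mul

/-- A path-connected topological inf-semilattice has trivial homotopy groups in every
positive degree, at every basepoint. -/
theorem stmt_11 {L : Type*} [SemilatticeInf L] [TopologicalSpace L]
    [PathConnectedSpace L]
    (hinf : Continuous fun p : L × L => p.1 ⊓ p.2) :
    ∀ (x : L) (n : ℕ), 1 ≤ n → Subsingleton (HomotopyGroup (Fin n) L x) :=
  stmt_11_general hinf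
end

section
/- Let L be a complete lattice equipped with a compact Hausdorff topology for which both the binary infimum ⊓ : L × L → L and the binary supremum ⊔ : L × L → L are jointly continuous, and such that every point of L has a neighborhood basis of sets closed under ⊓ and a neighborhood basis of sets closed under ⊔ (i.e., L is a hypercontinuous lattice equipped with its Lawson topology). If the underlying topological space of L is homotopy equivalent to a connected CW complex, then L is future contractible: there exists a continuous H : L × [0,1] → L, monotone with respect to the product order (the lattice order on L and the standard order on [0,1]), with H(·,0) = id_L and H(·,1) the constant map at ⊤ (the maximum of L). -/
/-!
A CW complex is locally path-connected, so a connected one is path-connected, and hence so is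
`L`, which is homotopy equivalent to it. Let `γ` be a path from `⊥` to `⊤` and let
`c t = ⨆ s ≤ t, γ s` be its running supremum; then `H (x, t) = x ⊔ c t` is the required future
contraction. Continuity of `c` from the left is monotone convergence in the compact pospace `L`.
From the right, `c s = c t ⊔ ⨆ u ∈ [t, s], γ u`, and the last supremum tends to `γ t` because
`γ t` has a basis of sup-closed neighbourhoods and the supremum of a subset of a sup-closed set
lies in its closure.
-/

open unitInterval

universe u v w

open CategoryTheory Limits Set Filter Topology

namespace TopCat

theorem locallyPathConnectedSpace_of_isColimit {J : Type v} [Category J]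
    {F : J ⥤ TopCat.{u}} {c : Cocone F} (hc : IsColimit c) {ι : Type w} (o : ι → J)
    (hlpc : ∀ i, LocallyPathConnectedSpace (F.obj (o i))) (ho : ∀ j, ∃ i, Nonempty (j ⟶ o i)) :
    LocallyPathConnectedSpace c.pt := by
  let g : (Σ i, F.obj (o i)) → c.pt := fun x => c.ι.app (o x.1) x.2
  have htop : c.pt.str = .coinduced g inferInstance := by
    refine TopologicalSpace.ext_iff.2 fun U => ?_
    rw [isOpen_iff_of_isColimit c hc, isOpen_coinduced, isOpen_sigma_iff]
    refine ⟨fun h i => h (o i), fun h j => ?_⟩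
    obtain ⟨i, ⟨f⟩⟩ := ho j
    rw [← c.w f]
    exact (h i).preimage (F.map f).hom.continuous
  exact htop ▸ LocallyPathConnectedSpace.coinduced g

theorem locallyPathConnectedSpace_disk (n : ℕ) : LocallyPathConnectedSpace (𝔻 n : TopCat.{u}) :=
  have := (convex_closedBall (0 : EuclideanSpace ℝ (Fin n)) 1).locallyPathConnectedSpace
  Homeomorph.ulift.symm.isQuotientMap.locallyPathConnectedSpace

-- The apex of the pushout span (the coproduct of spheres) maps to the coproduct of disks, so only
-- the disks and the old skeleton need to be locally path-connected.
theorem locallyPathConnectedSpace_of_attachCells {X₁ X₂ : TopCat.{u}} {f : X₁ ⟶ X₂} {n : ℕ}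
    (att : HomotopicalAlgebra.AttachCells (RelativeCWComplex.basicCell n) f)
    [LocallyPathConnectedSpace X₁] : LocallyPathConnectedSpace X₂ := by
  have : LocallyPathConnectedSpace att.cofan₂.pt :=
    locallyPathConnectedSpace_of_isColimit att.isColimit₂ Discrete.mk
      (fun _ => locallyPathConnectedSpace_disk n) fun j => ⟨j.as, ⟨eqToHom rfl⟩⟩
  refine locallyPathConnectedSpace_of_isColimit att.isPushout.isColimit
    (fun b : Bool => cond b WalkingSpan.left WalkingSpan.right) (fun b => ?_) fun j => ?_
  · cases b <;> assumption
  · rcases j with _ | _ | _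
    · exact ⟨true, ⟨WalkingSpan.Hom.fst⟩⟩
    · exact ⟨true, ⟨𝟙 _⟩⟩
    · exact ⟨false, ⟨𝟙 _⟩⟩

theorem CWComplex.locallyPathConnectedSpace_skeleton {C : TopCat.{u}} (hC : CWComplex C) :
    ∀ n, LocallyPathConnectedSpace (hC.F.obj n)
  | 0 =>
    have : IsEmpty (hC.F.obj 0) :=
      ⟨fun x => PEmpty.elim ((hC.isoBot.hom ≫ initial.to (TopCat.of PEmpty)) x)⟩
    ⟨fun x => isEmptyElim x⟩
  | n + 1 =>
    have := hC.locallyPathConnectedSpace_skeleton n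
    locallyPathConnectedSpace_of_attachCells (hC.attachCells n (not_isMax n))

theorem CWComplex.locallyPathConnectedSpace {C : TopCat.{u}} (hC : CWComplex C) :
    LocallyPathConnectedSpace C :=
  locallyPathConnectedSpace_of_isColimit hC.isColimit id hC.locallyPathConnectedSpace_skeleton
    fun j => ⟨j, ⟨𝟙 j⟩⟩

end TopCat

theorem ContinuousMap.HomotopyEquiv.pathConnectedSpace {X Y : Type*} [TopologicalSpace X]
    [TopologicalSpace Y] [PathConnectedSpace Y] (e : ContinuousMap.HomotopyEquiv X Y) :
    PathConnectedSpace X := by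
  obtain ⟨K⟩ := e.left_inv
  have joined_self (x : X) : Joined (e.invFun (e.toFun x)) x := ⟨K.evalAt x⟩
  refine ⟨PathConnectedSpace.nonempty.map e.invFun, fun x y => ?_⟩
  exact (joined_self x).symm.trans
    (((PathConnectedSpace.joined _ _).map e.invFun.continuous).trans (joined_self y))

theorem OrderClosedTopology.of_continuousSup {L : Type*} [SemilatticeSup L] [TopologicalSpace L]
    [T2Space L] [ContinuousSup L] : OrderClosedTopology L :=
  ⟨by simpa only [sup_eq_right] using isClosed_eq (continuous_sup (L := L)) continuous_snd⟩

section CompactOrder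

variable {L : Type*} [TopologicalSpace L] [CompactSpace L]

-- A cluster point of a directed family lies above each member and below each upper bound.
instance (priority := 100) CompactSpace.supConvergenceClass [PartialOrder L]
    [OrderClosedTopology L] : SupConvergenceClass L := by
  refine ⟨fun a s ha => tendsto_nhds_of_unique_mapClusterPt fun y hy => ?_⟩
  have mem {C : Set L} (hC : IsClosed C) (h : ∀ᶠ x : s in atTop, (x : L) ∈ C) : y ∈ C :=
    hC.closure_eq ▸ hy.mem_closure_of_mem C h
  exact le_antisymm (mem isClosed_Iic (.of_forall fun x => ha.1 x.2))
    (ha.2 fun x hx => mem isClosed_Ici (eventually_ge_atTop (⟨x, hx⟩ : s)))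

theorem DirectedOn.sSup_mem_closure [CompleteLattice L] [OrderClosedTopology L] {s : Set L}
    (hd : DirectedOn (· ≤ ·) s) (hs : s.Nonempty) : sSup s ∈ closure s := by
  have := hs.to_subtype
  have := hd.isDirectedOrder
  exact mem_closure_of_tendsto (SupConvergenceClass.tendsto_coe_atTop_isLUB _ _ (isLUB_sSup s))
    (.of_forall Subtype.prop)

theorem SupClosed.sSup_mem_closure_of_subset [CompleteLattice L] [OrderClosedTopology L]
    {s t : Set L} (hs : SupClosed s) (ht : t.Nonempty) (hts : t ⊆ s) : sSup t ∈ closure s := by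
  rw [← (isLUB_supClosure.2 (isLUB_sSup t)).sSup_eq]
  exact closure_mono (supClosure_min hts hs)
    (supClosed_supClosure.directedOn.sSup_mem_closure (ht.mono subset_supClosure))

end CompactOrder

section RunningSup

variable {α L : Type*} [LinearOrder α] [CompleteLattice L] (p : α → L)

def runningSup (t : α) : L := sSup (p '' Iic t)

theorem monotone_runningSup : Monotone (runningSup p) := fun _ _ h =>
  sSup_le_sSup (image_mono (Iic_subset_Iic.2 h))

theorem le_runningSup {s t : α} (h : s ≤ t) : p s ≤ runningSup p t :=
  le_sSup (mem_image_of_mem p h)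

theorem runningSup_eq_sup {s t : α} (h : t ≤ s) :
    runningSup p s = runningSup p t ⊔ sSup (p '' Icc t s) := by
  rw [runningSup, runningSup, ← sSup_union, ← image_union, Iic_union_Icc_eq_Iic h]

variable [TopologicalSpace α] [OrderTopology α] [TopologicalSpace L] [CompactSpace L]
  [OrderClosedTopology L] {p}

theorem tendsto_runningSup_nhdsLT [DenselyOrdered α] [NoMinOrder α] {t : α}
    (hp : ContinuousAt p t) : Tendsto (runningSup p) (𝓝[<] t) (𝓝 (runningSup p t)) := by
  have hlim : Tendsto (runningSup p) (𝓝[<] t) (𝓝 (⨆ s : Iio t, runningSup p s)) :=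
    (tendsto_comp_coe_Iio_atTop).1
      (tendsto_atTop_iSup fun a b h => monotone_runningSup p (Subtype.mono_coe _ h))
  have hbound (s : Iio t) : p s ≤ ⨆ s : Iio t, runningSup p s :=
    (le_runningSup p le_rfl).trans (le_iSup (fun s : Iio t => runningSup p s) s)
  convert hlim using 2
  refine le_antisymm (sSup_le ?_) (iSup_le fun s => monotone_runningSup p s.2.le)
  rintro _ ⟨s, hs, rfl⟩
  rcases (mem_Iic.1 hs).lt_or_eq with hs | rfl
  · exact hbound ⟨s, hs⟩
  · -- `p s` is a limit of values `p s'` with `s' < s`.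
    exact le_of_tendsto (hp.mono_left nhdsWithin_le_nhds)
      (eventually_nhdsWithin_of_forall fun s' hs' => hbound ⟨s', hs'⟩)

theorem tendsto_sSup_image_Icc_nhdsGE [NoMaxOrder α] {t : α} (hp : ContinuousAt p t)
    (hbasis : (𝓝 (p t)).HasBasis (fun V => V ∈ 𝓝 (p t) ∧ SupClosed V) id) :
    Tendsto (fun s => sSup (p '' Icc t s)) (𝓝[≥] t) (𝓝 (p t)) := by
  refine (closed_nhds_basis (p t)).tendsto_right_iff.2 fun W ⟨hW, hWc⟩ => ?_
  obtain ⟨V, ⟨hV, hVsup⟩, hVW⟩ := hbasis.mem_iff.1 hW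
  obtain ⟨u, htu, hu⟩ := exists_Ico_subset_of_mem_nhds (hp.preimage_mem_nhds hV) (exists_gt t)
  filter_upwards [Ico_mem_nhdsGE htu] with s hs
  have hsub : p '' Icc t s ⊆ V := image_subset_iff.2 ((Icc_subset_Ico_right hs.2).trans hu)
  exact closure_minimal hVW hWc
    (hVsup.sSup_mem_closure_of_subset ((nonempty_Icc.2 hs.1).image p) hsub)

theorem tendsto_runningSup_nhdsGE [NoMaxOrder α] [ContinuousSup L] {t : α}
    (hp : ContinuousAt p t)
    (hbasis : (𝓝 (p t)).HasBasis (fun V => V ∈ 𝓝 (p t) ∧ SupClosed V) id) :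
    Tendsto (runningSup p) (𝓝[≥] t) (𝓝 (runningSup p t)) := by
  have hlim := (tendsto_const_nhds (x := runningSup p t)).sup_nhds
    (tendsto_sSup_image_Icc_nhdsGE hp hbasis)
  rw [sup_eq_left.2 (le_runningSup p le_rfl)] at hlim
  exact hlim.congr' (eventually_nhdsWithin_of_forall fun s hs => (runningSup_eq_sup p hs).symm)

theorem continuous_runningSup [DenselyOrdered α] [NoMinOrder α] [NoMaxOrder α] [ContinuousSup L]
    (hp : Continuous p)
    (hbasis : ∀ x : L, (𝓝 x).HasBasis (fun V => V ∈ 𝓝 x ∧ SupClosed V) id) :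
    Continuous (runningSup p) :=
  continuous_iff_continuousAt.2 fun t => by
    rw [ContinuousAt, ← nhdsLT_sup_nhdsGE]
    exact tendsto_sup.2 ⟨tendsto_runningSup_nhdsLT hp.continuousAt,
      tendsto_runningSup_nhdsGE hp.continuousAt (hbasis (p t))⟩

end RunningSup

theorem exists_future_contraction_of_joined_bot_top {L : Type*} [CompleteLattice L]
    [TopologicalSpace L] [CompactSpace L] [OrderClosedTopology L] [ContinuousSup L]
    (hbasis : ∀ x : L, (𝓝 x).HasBasis (fun V => V ∈ 𝓝 x ∧ SupClosed V) id)
    (hj : Joined (⊥ : L) ⊤) :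
    ∃ H : L × I → L, Continuous H ∧ Monotone H ∧
      (∀ x : L, H (x, 0) = x) ∧ (∀ x : L, H (x, 1) = ⊤) := by
  let γ := hj.somePath
  let c := runningSup γ.extend
  have hc0 : c 0 = ⊥ := sSup_eq_bot.2 fun _ ⟨s, hs, hγ⟩ => hγ ▸ γ.extend_of_le_zero hs
  have hc1 : c 1 = ⊤ := top_unique (γ.extend_one ▸ le_runningSup γ.extend le_rfl)
  refine ⟨fun q => q.1 ⊔ c q.2, ?_, fun q q' h => sup_le_sup h.1 (monotone_runningSup _ h.2),
    fun x => by simp [hc0], fun x => by simp [hc1]⟩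
  exact continuous_fst.sup ((continuous_runningSup γ.continuous_extend hbasis).comp
    (continuous_subtype_val.comp continuous_snd))

theorem stmt_12_general {L : Type u} [CompleteLattice L] [TopologicalSpace L]
    [CompactSpace L] [T2Space L]
    (hsup : Continuous fun p : L × L => p.1 ⊔ p.2)
    (hsupBasis : ∀ x : L, (nhds x).HasBasis
      (fun s : Set L => s ∈ nhds x ∧ ∀ a ∈ s, ∀ b ∈ s, a ⊔ b ∈ s) id)
    (hcw : ∃ (C : TopCat.{u}) (_ : TopCat.CWComplex C), ConnectedSpace C ∧
      Nonempty (ContinuousMap.HomotopyEquiv L C)) :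
    ∃ H : L × I → L, Continuous H ∧ Monotone H ∧
      (∀ x : L, H (x, 0) = x) ∧ (∀ x : L, H (x, 1) = ⊤) := by
  obtain ⟨C, hC, hconn, ⟨e⟩⟩ := hcw
  have := hC.locallyPathConnectedSpace
  have : PathConnectedSpace C := pathConnectedSpace_iff_connectedSpace.2 hconn
  have : PathConnectedSpace L := e.pathConnectedSpace
  have : ContinuousSup L := ⟨hsup⟩
  have : OrderClosedTopology L := .of_continuousSup
  exact exists_future_contraction_of_joined_bot_top hsupBasis (PathConnectedSpace.joined ⊥ ⊤)

/-- A hypercontinuous lattice equipped with its Lawson topology (a complete lattice with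
a compact Hausdorff topology for which binary inf and binary sup are jointly continuous
and every point admits neighborhood bases of sub-semilattices for each operation) is
future contractible if its underlying space is homotopy equivalent to a connected
CW complex. -/
theorem stmt_12 {L : Type u} [CompleteLattice L] [TopologicalSpace L]
    [CompactSpace L] [T2Space L]
    (hinf : Continuous fun p : L × L => p.1 ⊓ p.2)
    (hsup : Continuous fun p : L × L => p.1 ⊔ p.2)
    (hinfBasis : ∀ x : L, (nhds x).HasBasis
      (fun s : Set L => s ∈ nhds x ∧ ∀ a ∈ s, ∀ b ∈ s, a ⊓ b ∈ s) id)
    (hsupBasis : ∀ x : L, (nhds x).HasBasis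
      (fun s : Set L => s ∈ nhds x ∧ ∀ a ∈ s, ∀ b ∈ s, a ⊔ b ∈ s) id)
    (hcw : ∃ (C : TopCat.{u}) (_ : TopCat.CWComplex C), ConnectedSpace C ∧
      Nonempty (ContinuousMap.HomotopyEquiv L C)) :
    ∃ H : L × I → L, Continuous H ∧ Monotone H ∧
      (∀ x : L, H (x, 0) = x) ∧ (∀ x : L, H (x, 1) = ⊤) :=
  stmt_12_general hsup hsupBasis hcw
end
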